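/- Let r be the Rudin–Shapiro sequence and let Q^b be defined from the blocks r_{2^n}···r_{2^{n+1}−1}. Then for all j ≥ 2: (1) Q^b_{2^{2j}−2}(x) ≡ 1 + 2(1 + x)·S_{2j-2}(x) (mod 4); (2) Q^b_{2^{2j+1}−2}(x) ≡ 1 + 2x + 2(1 + x)·S_{2j-1}(x) (mod 4); (3) Q^b_{2^{2j}−1}(x) ≡ 1 + 2x² + 2x⁵ + (3 + 2x³)·S_{2j-2}(x) + (2 + 2x)·T_{2j-2}(x) + 2x·S^e_{j-1}(x) + x^{2^{2j-1}} (mod 4); (4) Q^b_{2^{2j+1}−1}(x) ≡ 1 + 2x² + 2x⁵ + (3 + 2x³)·S_{2j-1}(x) + (2 + 2x)·T_{2j-1}(x) + 2x·S^o_{j-1}(x) + x^{2^{2j}} (mod 4). -/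

import Mathlib

open Polynomial

/-- The elementary matrix `[[0, c_i x],[1,1]]` used to build the convergents of a
Stieltjes continued fraction. -/
noncomputable def step (c : ℕ → ℤ) (i : ℕ) : Matrix (Fin 2) (Fin 2) (Polynomial ℤ) :=
  !![0, Polynomial.C (c i) * Polynomial.X; 1, 1]

/-- `S_n(x) = Σ_{i=0}^{n} x^{2^i}`. -/
noncomputable def Spoly (n : ℕ) : Polynomial ℤ :=
  ∑ i ∈ Finset.range (n + 1), Polynomial.X ^ (2 ^ i)

/-- `S^e_n(x) = Σ_{i=0}^{n} x^{2^{2i}}`. -/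
noncomputable def Sepoly (n : ℕ) : Polynomial ℤ :=
  ∑ i ∈ Finset.range (n + 1), Polynomial.X ^ (2 ^ (2 * i))

/-- `S^o_n(x) = Σ_{i=0}^{n} x^{2^{2i+1}}`. -/
noncomputable def Sopoly (n : ℕ) : Polynomial ℤ :=
  ∑ i ∈ Finset.range (n + 1), Polynomial.X ^ (2 ^ (2 * i + 1))

/-- `T_n(x) = Σ_{i=3}^{n} Σ_{k=2}^{i-1} x^{2^i + 2^k}` (so `T_2 = 0`). -/
noncomputable def Tpoly (n : ℕ) : Polynomial ℤ :=
  ∑ i ∈ Finset.Icc 3 n, ∑ k ∈ Finset.Icc 2 (i - 1), Polynomial.X ^ (2 ^ i + 2 ^ k)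

/-!
Let `G_n` be the product of the first `2 ^ n` step matrices and `N_n` the product over the block
`2 ^ n ≤ i < 2 ^ (n + 1)`, so that `Q^b_{2^n-2}, Q^b_{2^n-1}` is the bottom row of `N_n`. The
self-similarity `r (2 ^ (n + 1) + j) = r j`, `r (3 * 2 ^ n + j) = - r (2 ^ n + j)` for `j < 2 ^ n`
gives `G_{n+1} = G_n N_n` and `N_{n+1} = G_n N_n(-x)`. Modulo 4 both matrices have closed forms
(`prefixForm`, `blockForm`) affine in `S_{n-2}`, `T_{n-2}`, the alternating sums `S^e`, `S^o` and
the parity of `n`, plus the single monomial `x ^ 2 ^ (n - 1)`. Every product of two terms with a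
factor 2 vanishes mod 4, so the only nonlinear input needed to push the closed forms through the
recursion is the exact identity
`S_m ^ 2 = S_m + x ^ 2 ^ (m + 1) - x + 2 x S_m + 2 x² S_m - 2 x² - 2 x³ - 2 x⁴ + 2 T_m`.
The induction starts from `n = 3`, computed by hand from `r 0 = r 1 = 1`.
-/

theorem mapMatrix_fin_two {α β : Type*} [NonAssocSemiring α] [NonAssocSemiring β] (f : α →+* β)
    (a b c d : α) : f.mapMatrix !![a, b; c, d] = !![f a, f b; f c, f d] := by
  ext i j
  fin_cases i <;> fin_cases j <;> rfl

section RudinShapiro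

variable {r : ℕ → ℤ} (hre : ∀ n, r (2 * n) = r n) (hro : ∀ n, r (2 * n + 1) = (-1) ^ n * r n)
include hre hro

theorem rudinShapiro_two_pow_succ_add (n : ℕ) {j : ℕ} (hj : j < 2 ^ n) :
    r (2 ^ (n + 1) + j) = r j := by
  induction n generalizing j with
  | zero =>
    obtain rfl : j = 0 := by omega
    simpa using (hre 1).trans (hro 0)
  | succ n ih =>
    obtain ⟨m, rfl | rfl⟩ := Nat.even_or_odd' j
    · rw [show 2 ^ (n + 2) + 2 * m = 2 * (2 ^ (n + 1) + m) by ring, hre, hre, ih (by omega)]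
    · have hpow : (-1 : ℤ) ^ (2 ^ (n + 1) + m) = (-1) ^ m := by
        rw [pow_add, (Nat.even_pow.mpr ⟨even_two, n.succ_ne_zero⟩).neg_one_pow, one_mul]
      rw [show 2 ^ (n + 2) + (2 * m + 1) = 2 * (2 ^ (n + 1) + m) + 1 by ring, hro, hro, hpow,
        ih (by omega)]

theorem rudinShapiro_three_mul_two_pow_add (n : ℕ) {j : ℕ} (hj : j < 2 ^ n) :
    r (3 * 2 ^ n + j) = -r (2 ^ n + j) := by
  induction n generalizing j with
  | zero =>
    obtain rfl : j = 0 := by omega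
    simpa using hro 1
  | succ n ih =>
    obtain ⟨m, rfl | rfl⟩ := Nat.even_or_odd' j
    · rw [show 3 * 2 ^ (n + 1) + 2 * m = 2 * (3 * 2 ^ n + m) by ring,
        show 2 ^ (n + 1) + 2 * m = 2 * (2 ^ n + m) by ring, hre, hre, ih (by omega)]
    · have hpow : (-1 : ℤ) ^ (3 * 2 ^ n + m) = (-1) ^ (2 ^ n + m) := by
        rw [show 3 * 2 ^ n + m = 2 ^ (n + 1) + (2 ^ n + m) by ring, pow_add,
          (Nat.even_pow.mpr ⟨even_two, n.succ_ne_zero⟩).neg_one_pow, one_mul]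
      rw [show 3 * 2 ^ (n + 1) + (2 * m + 1) = 2 * (3 * 2 ^ n + m) + 1 by ring,
        show 2 ^ (n + 1) + (2 * m + 1) = 2 * (2 ^ n + m) + 1 by ring, hro, hro, hpow,
        ih (by omega), mul_neg]

end RudinShapiro

section BlockProducts

noncomputable def blockProd (r : ℕ → ℤ) (a k : ℕ) : Matrix (Fin 2) (Fin 2) ℤ[X] :=
  ((List.range k).map fun i => step r (a + i)).prod

variable {r : ℕ → ℤ}

theorem blockProd_one (a : ℕ) : blockProd r a 1 = step r a := by
  simp [blockProd]

theorem blockProd_add (a k l : ℕ) :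
    blockProd r a (k + l) = blockProd r a k * blockProd r (a + k) l := by
  simp only [blockProd, List.range_add, List.map_append, List.prod_append, List.map_map]
  congr 3
  ext i
  simp [add_assoc]

theorem mapMatrix_compRingHom_step (i : ℕ) :
    (compRingHom (-X)).mapMatrix (step r i) = step (-r) i := by
  rw [step, step, mapMatrix_fin_two]
  simp

theorem blockProd_zero_two_pow_succ (n : ℕ) :
    blockProd r 0 (2 ^ (n + 1)) = blockProd r 0 (2 ^ n) * blockProd r (2 ^ n) (2 ^ n) := by
  rw [pow_succ, mul_two, blockProd_add, zero_add]

variable (hre : ∀ n, r (2 * n) = r n) (hro : ∀ n, r (2 * n + 1) = (-1) ^ n * r n)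
include hre hro

theorem blockProd_two_pow_succ (n : ℕ) :
    blockProd r (2 ^ (n + 1)) (2 ^ (n + 1)) =
      blockProd r 0 (2 ^ n) * (compRingHom (-X)).mapMatrix (blockProd r (2 ^ n) (2 ^ n)) := by
  have hfirst : blockProd r (2 ^ (n + 1)) (2 ^ n) = blockProd r 0 (2 ^ n) := by
    refine congrArg List.prod (List.map_congr_left fun i hi => ?_)
    rw [step, step, rudinShapiro_two_pow_succ_add hre hro n (List.mem_range.mp hi), zero_add]
  have hsecond : blockProd r (2 ^ (n + 1) + 2 ^ n) (2 ^ n) =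
      (compRingHom (-X)).mapMatrix (blockProd r (2 ^ n) (2 ^ n)) := by
    rw [blockProd, blockProd, map_list_prod, List.map_map]
    refine congrArg List.prod (List.map_congr_left fun i hi => ?_)
    rw [Function.comp_apply, mapMatrix_compRingHom_step, step, step, Pi.neg_apply,
      ← rudinShapiro_three_mul_two_pow_add hre hro n (List.mem_range.mp hi),
      show 2 ^ (n + 1) + 2 ^ n + i = 3 * 2 ^ n + i by ring]
  rw [pow_succ 2 n, mul_two, blockProd_add, ← mul_two, ← pow_succ, hfirst, hsecond]

end BlockProducts

section Sums

theorem Spoly_succ (m : ℕ) : Spoly (m + 1) = Spoly m + X ^ 2 ^ (m + 1) :=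
  Finset.sum_range_succ _ _

theorem Spoly_one : Spoly 1 = X + X ^ 2 := by
  simp [Spoly, Finset.sum_range_succ]

theorem Spoly_eq_X_add_X_sq_add_sum {m : ℕ} (hm : 1 ≤ m) :
    Spoly m = X + X ^ 2 + ∑ k ∈ Finset.Icc 2 m, X ^ 2 ^ k := by
  induction m, hm using Nat.le_induction with
  | base => simp [Spoly_one]
  | succ m hm ih => rw [Spoly_succ, ih, Finset.sum_Icc_succ_top (by omega), add_assoc]

theorem Tpoly_one : Tpoly 1 = 0 := by
  simp [Tpoly]

theorem Tpoly_succ {m : ℕ} (hm : 1 ≤ m) :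
    Tpoly (m + 1) = Tpoly m + X ^ 2 ^ (m + 1) * (Spoly m - X - X ^ 2) := by
  obtain rfl | hm := hm.eq_or_lt
  · simp [Tpoly, Spoly_one]
  rw [Tpoly, Finset.sum_Icc_succ_top (by omega), ← Tpoly, Spoly_eq_X_add_X_sq_add_sum hm.le,
    Nat.add_sub_cancel, show ∀ p : ℤ[X], X + X ^ 2 + p - X - X ^ 2 = p from fun p => by ring,
    Finset.mul_sum]
  simp only [pow_add]

theorem Spoly_sq {m : ℕ} (hm : 1 ≤ m) :
    Spoly m ^ 2 = Spoly m + X ^ 2 ^ (m + 1) - X + 2 * X * Spoly m + 2 * X ^ 2 * Spoly m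
      - 2 * X ^ 2 - 2 * X ^ 3 - 2 * X ^ 4 + 2 * Tpoly m := by
  induction m, hm using Nat.le_induction with
  | base => rw [Spoly_one, Tpoly_one]; ring
  | succ m hm ih =>
    rw [Spoly_succ, Tpoly_succ hm, pow_succ 2 (m + 1), pow_mul]
    linear_combination ih

-- `altSpoly n = ∑ x ^ 2 ^ e` over `e < n - 1` with `e ≡ n [MOD 2]`.
noncomputable def altSpoly : ℕ → ℤ[X]
  | 0 => 0
  | 1 => 0
  | n + 2 => altSpoly n + X ^ 2 ^ n

theorem altSpoly_add_altSpoly_succ : ∀ n, altSpoly (n + 1) + altSpoly (n + 2) = Spoly n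
  | 0 => by simp [altSpoly, Spoly]
  | n + 1 => by
    rw [Spoly_succ, ← altSpoly_add_altSpoly_succ n]
    change altSpoly (n + 2) + (altSpoly (n + 1) + X ^ 2 ^ (n + 1)) = _
    ring

theorem altSpoly_add_two (n : ℕ) : altSpoly (n + 2) = Spoly n - altSpoly (n + 1) :=
  eq_sub_of_add_eq' (altSpoly_add_altSpoly_succ n)

theorem altSpoly_two_mul_add_two (j : ℕ) : altSpoly (2 * j + 2) = Sepoly j := by
  induction j with
  | zero => simp [altSpoly, Sepoly]
  | succ j ih =>
    rw [show 2 * (j + 1) + 2 = 2 * j + 2 + 2 by ring, altSpoly, ih]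
    exact (Finset.sum_range_succ _ _).symm

theorem altSpoly_two_mul_add_three (j : ℕ) : altSpoly (2 * j + 3) = Sopoly j := by
  induction j with
  | zero => simp [altSpoly, Sopoly]
  | succ j ih =>
    rw [show 2 * (j + 1) + 3 = 2 * j + 3 + 2 by ring, altSpoly, ih]
    exact (Finset.sum_range_succ _ _).symm

end Sums

section NegX

theorem X_pow_two_pow_succ_comp_neg_X {R : Type*} [CommRing R] (k : ℕ) :
    (X ^ 2 ^ (k + 1) : R[X]).comp (-X) = X ^ 2 ^ (k + 1) := by
  rw [X_pow_comp, (Nat.even_pow.mpr ⟨even_two, k.succ_ne_zero⟩).neg_pow]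

theorem Spoly_comp_neg_X (m : ℕ) : (Spoly m).comp (-X) = Spoly m - 2 * X := by
  induction m with
  | zero =>
    simp only [Spoly, zero_add, Finset.range_one, Finset.sum_singleton, pow_zero, pow_one, X_comp]
    ring
  | succ m ih => rw [Spoly_succ, add_comp, ih, X_pow_two_pow_succ_comp_neg_X]; ring

theorem Tpoly_comp_neg_X (m : ℕ) : (Tpoly m).comp (-X) = Tpoly m := by
  simp only [Tpoly, sum_comp, X_pow_comp]
  refine Finset.sum_congr rfl fun i hi => Finset.sum_congr rfl fun k hk => ?_
  have hi : i ≠ 0 := by grind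
  have hk : k ≠ 0 := by grind
  exact ((Nat.even_pow.mpr ⟨even_two, hi⟩).add (Nat.even_pow.mpr ⟨even_two, hk⟩)).neg_pow _

theorem altSpoly_comp_neg_X :
    ∀ m, (altSpoly (m + 2)).comp (-X) = altSpoly (m + 2) - 2 * X * (1 - ((m % 2 : ℕ) : ℤ[X]))
  | 0 => by
    simp only [altSpoly, pow_zero, pow_one, zero_add, X_comp, Nat.zero_mod, Nat.cast_zero,
      sub_zero, mul_one]
    ring
  | 1 => by simp [altSpoly]
  | m + 2 => by
    rw [altSpoly, add_comp, altSpoly_comp_neg_X m,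
      X_pow_two_pow_succ_comp_neg_X, Nat.add_mod_right]
    ring

end NegX

section ClosedForms

variable {R : Type*} [CommRing R]

def blockForm (x s t u A d : R) : Matrix (Fin 2) (Fin 2) R :=
  !![s + 2 * x ^ 2 + 2 * x ^ 5 + 2 * x ^ 3 * s + (2 + 2 * x) * t + 2 * x * u + A,
     x + 2 * x ^ 3 + 2 * x ^ 4 + 2 * x ^ 5 + 2 * x ^ 3 * s + 2 * x * t + 2 * x * u + 2 * d * x ^ 2;
     1 + (2 + 2 * x) * s + 2 * d * x,
     1 + 2 * x ^ 2 + 2 * x ^ 5 + 3 * s + 2 * x ^ 3 * s + (2 + 2 * x) * t + 2 * x * u + A]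

def prefixForm (x s t u A d : R) : Matrix (Fin 2) (Fin 2) R :=
  blockForm x s t u A (1 - d) + !![2 * x * s, 2 * x * s; 0, 2 * x * s]

theorem map_blockForm {S : Type*} [CommRing S] (f : R →+* S) (x s t u A d : R) :
    f.mapMatrix (blockForm x s t u A d) = blockForm (f x) (f s) (f t) (f u) (f A) (f d) := by
  simp only [blockForm, mapMatrix_fin_two, map_add, map_mul, map_pow, map_one, map_ofNat]

theorem map_prefixForm {S : Type*} [CommRing S] (f : R →+* S) (x s t u A d : R) :
    f.mapMatrix (prefixForm x s t u A d) = prefixForm (f x) (f s) (f t) (f u) (f A) (f d) := by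
  simp only [prefixForm, map_add, map_blockForm, mapMatrix_fin_two, map_sub, map_mul, map_one,
    map_zero, map_ofNat]

variable [CharP R 4] {x s t u A d : R}
  (hs : s ^ 2 = s + A - x + 2 * x * s + 2 * x ^ 2 * s - 2 * x ^ 2 - 2 * x ^ 3 - 2 * x ^ 4 + 2 * t)
include hs

theorem prefixForm_succ :
    prefixForm x (s + A) (t + A * (s - x - x ^ 2)) (s + A - u) (A ^ 2) (1 - d) =
      prefixForm x s t u A d * blockForm x s t u A d := by
  ext i j
  fin_cases i <;> fin_cases j <;>
    simp only [prefixForm, blockForm, Matrix.of_add_of, Matrix.add_cons, Matrix.head_cons,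
      Matrix.tail_cons, Matrix.empty_add_empty, Matrix.mul_apply, Fin.sum_univ_two, Matrix.of_apply,
      Matrix.cons_val', Matrix.cons_val_zero, Matrix.cons_val_one, Matrix.cons_val_fin_one,
      Fin.zero_eta, Fin.mk_one, Fin.isValue]
  · linear_combination (norm := (ring_nf; reduce_mod_char!)) (3 + 2 * x) * hs
  · linear_combination (norm := (ring_nf; reduce_mod_char!)) 2 * x * hs
  · linear_combination (norm := (ring_nf; reduce_mod_char!))
  · linear_combination (norm := (ring_nf; reduce_mod_char!)) (3 + 2 * x) * hs

theorem blockForm_succ :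
    blockForm x (s + A) (t + A * (s - x - x ^ 2)) (s + A - u) (A ^ 2) (1 - d) =
      prefixForm x s t u A d * blockForm (-x) (s - 2 * x) t (u - 2 * x * (1 - d)) A d := by
  ext i j
  fin_cases i <;> fin_cases j <;>
    simp only [prefixForm, blockForm, Matrix.of_add_of, Matrix.add_cons, Matrix.head_cons,
      Matrix.tail_cons, Matrix.empty_add_empty, Matrix.mul_apply, Fin.sum_univ_two, Matrix.of_apply,
      Matrix.cons_val', Matrix.cons_val_zero, Matrix.cons_val_one, Matrix.cons_val_fin_one,
      Fin.zero_eta, Fin.mk_one, Fin.isValue]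
  · linear_combination (norm := (ring_nf; reduce_mod_char!)) (3 + 2 * x) * hs
  · linear_combination (norm := (ring_nf; reduce_mod_char!)) 2 * x * hs
  · linear_combination (norm := (ring_nf; reduce_mod_char!))
  · linear_combination (norm := (ring_nf; reduce_mod_char!)) (3 + 2 * x) * hs

end ClosedForms

section Base

variable {r : ℕ → ℤ} (hr0 : r 0 = 1) (hre : ∀ n, r (2 * n) = r n)
  (hro : ∀ n, r (2 * n + 1) = (-1) ^ n * r n)
include hr0 hre hro

theorem blockProd_two_pow_three :
    blockProd r 0 (2 ^ 3) = !![X + X ^ 2 - X ^ 4, X + 2 * X ^ 2 + 2 * X ^ 3;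
      1 + 2 * X - 2 * X ^ 3, 1 + 3 * X + 3 * X ^ 2 - X ^ 4] ∧
    blockProd r (2 ^ 3) (2 ^ 3) = !![X - X ^ 2 - 2 * X ^ 3 - X ^ 4, X - 2 * X ^ 2;
      1 - 4 * X ^ 2 - 2 * X ^ 3, 1 - X - 3 * X ^ 2 + 2 * X ^ 3 - X ^ 4] := by
  have hG0 : blockProd r 0 (2 ^ 0) = !![0, X; 1, 1] := by
    rw [pow_zero, blockProd_one, step, hr0, C_1, one_mul]
  have hN0 : blockProd r (2 ^ 0) (2 ^ 0) = !![0, X; 1, 1] := by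
    rw [pow_zero, blockProd_one, step, show r 1 = 1 by simpa [hr0] using hro 0, C_1, one_mul]
  have hG1 : blockProd r 0 (2 ^ 1) = !![X, X; 1, 1 + X] := by
    rw [blockProd_zero_two_pow_succ, hG0, hN0, Matrix.mul_fin_two]
    ring_nf
  have hN1 : blockProd r (2 ^ 1) (2 ^ 1) = !![X, X; 1, 1 - X] := by
    rw [blockProd_two_pow_succ hre hro, hG0, hN0, mapMatrix_fin_two, Matrix.mul_fin_two]
    simp only [coe_compRingHom_apply, X_comp, zero_comp, one_comp]
    ring_nf
  have hG2 : blockProd r 0 (2 ^ 2) = !![X + X ^ 2, X; 1 + 2 * X, 1 + X - X ^ 2] := by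
    rw [blockProd_zero_two_pow_succ, hG1, hN1, Matrix.mul_fin_two]
    ring_nf
  have hN2 : blockProd r (2 ^ 2) (2 ^ 2) = !![X - X ^ 2, X; 1, 1 + X + X ^ 2] := by
    rw [blockProd_two_pow_succ hre hro, hG1, hN1, mapMatrix_fin_two, Matrix.mul_fin_two]
    simp only [coe_compRingHom_apply, X_comp, one_comp, sub_comp]
    ring_nf
  constructor
  · rw [blockProd_zero_two_pow_succ, hG2, hN2, Matrix.mul_fin_two]
    ring_nf
  · rw [blockProd_two_pow_succ hre hro, hG2, hN2, mapMatrix_fin_two, Matrix.mul_fin_two]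
    simp only [coe_compRingHom_apply, X_comp, X_pow_comp, one_comp, add_comp, sub_comp]
    ring_nf

end Base

section ModFour

noncomputable abbrev modFour : ℤ[X] →+* (ZMod 4)[X] := mapRingHom (Int.castRingHom (ZMod 4))

theorem coeff_modEq_of_modFour_eq {p q : ℤ[X]} (h : modFour p = modFour q) (i : ℕ) :
    p.coeff i ≡ q.coeff i [ZMOD 4] := by
  have hi := congrArg (coeff · i) h
  simp only [coe_mapRingHom, coeff_map, eq_intCast] at hi
  exact (ZMod.intCast_eq_intCast_iff _ _ 4).mp hi

theorem mapMatrix_modFour_comp_neg_X (M : Matrix (Fin 2) (Fin 2) ℤ[X]) :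
    modFour.mapMatrix ((compRingHom (-X)).mapMatrix M) =
      (compRingHom (-X)).mapMatrix (modFour.mapMatrix M) := by
  ext i j : 1
  simp [Polynomial.map_comp]

theorem natCast_succ_mod_two {R : Type*} [Ring R] (m : ℕ) :
    (((m + 1) % 2 : ℕ) : R) = 1 - ((m % 2 : ℕ) : R) := by
  rcases Nat.mod_two_eq_zero_or_one m with h | h <;> simp [Nat.add_mod, h]

-- The closed forms at level `n = m + 2`; the last argument is the parity of `n`.
noncomputable def closedForm {α : Type*} (F : ℤ[X] → ℤ[X] → ℤ[X] → ℤ[X] → ℤ[X] → ℤ[X] → α)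
    (m : ℕ) : α :=
  F X (Spoly m) (Tpoly m) (altSpoly (m + 2)) (X ^ 2 ^ (m + 1)) ((m % 2 : ℕ) : ℤ[X])

theorem closedForm_succ {α : Type*} (F : ℤ[X] → ℤ[X] → ℤ[X] → ℤ[X] → ℤ[X] → ℤ[X] → α)
    {m : ℕ} (hm : 1 ≤ m) :
    closedForm F (m + 1) =
      F X (Spoly m + X ^ 2 ^ (m + 1)) (Tpoly m + X ^ 2 ^ (m + 1) * (Spoly m - X - X ^ 2))
        (Spoly m + X ^ 2 ^ (m + 1) - altSpoly (m + 2)) ((X ^ 2 ^ (m + 1)) ^ 2)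
        (1 - ((m % 2 : ℕ) : ℤ[X])) := by
  rw [closedForm, altSpoly_add_two, Spoly_succ, Tpoly_succ hm, pow_succ 2 (m + 1), pow_mul,
    natCast_succ_mod_two]

theorem closedForm_blockForm_comp_neg_X (m : ℕ) :
    (compRingHom (-X)).mapMatrix (closedForm blockForm m) =
      blockForm (-X) (Spoly m - 2 * X) (Tpoly m)
        (altSpoly (m + 2) - 2 * X * (1 - ((m % 2 : ℕ) : ℤ[X]))) (X ^ 2 ^ (m + 1))
        ((m % 2 : ℕ) : ℤ[X]) := by
  rw [closedForm, map_blockForm]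
  simp only [coe_compRingHom_apply, X_comp, Spoly_comp_neg_X, Tpoly_comp_neg_X,
    altSpoly_comp_neg_X, X_pow_two_pow_succ_comp_neg_X, natCast_comp]

theorem closedForm_blockForm_one_zero (m : ℕ) :
    closedForm blockForm m 1 0 = 1 + 2 * (1 + X) * Spoly m + 2 * ((m % 2 : ℕ) : ℤ[X]) * X := by
  simp only [closedForm, blockForm, Matrix.of_apply, Matrix.cons_val', Matrix.cons_val_zero,
    Matrix.cons_val_one, Matrix.cons_val_fin_one]
  ring

theorem closedForm_blockForm_one_one (m : ℕ) :
    closedForm blockForm m 1 1 = 1 + 2 * X ^ 2 + 2 * X ^ 5 + (3 + 2 * X ^ 3) * Spoly m +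
      (2 + 2 * X) * Tpoly m + 2 * X * altSpoly (m + 2) + X ^ 2 ^ (m + 1) := by
  simp only [closedForm, blockForm, Matrix.of_apply, Matrix.cons_val', Matrix.cons_val_one,
    Matrix.cons_val_fin_one]
  ring

variable {r : ℕ → ℤ} (hr0 : r 0 = 1) (hre : ∀ n, r (2 * n) = r n)
  (hro : ∀ n, r (2 * n + 1) = (-1) ^ n * r n)
include hr0 hre hro

theorem modFour_blockProd_two_pow_three :
    modFour.mapMatrix (blockProd r 0 (2 ^ 3)) = modFour.mapMatrix (closedForm prefixForm 1) ∧
    modFour.mapMatrix (blockProd r (2 ^ 3) (2 ^ 3)) =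
      modFour.mapMatrix (closedForm blockForm 1) := by
  obtain ⟨hG, hN⟩ := blockProd_two_pow_three hr0 hre hro
  rw [hG, hN, closedForm, closedForm, Spoly_one, Tpoly_one,
    show altSpoly (1 + 2) = X ^ 2 by simp [altSpoly]]
  constructor
  all_goals
    ext i j : 1
    fin_cases i <;> fin_cases j <;>
      simp only [prefixForm, blockForm, RingHom.mapMatrix_apply, coe_mapRingHom, Matrix.map_apply,
        Matrix.of_add_of, Matrix.add_cons, Matrix.head_cons, Matrix.tail_cons,
        Matrix.empty_add_empty, Matrix.of_apply, Matrix.cons_val', Matrix.cons_val_zero,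
        Matrix.cons_val_one, Matrix.cons_val_fin_one, Fin.zero_eta, Fin.mk_one, Fin.isValue,
        Polynomial.map_sub, Polynomial.map_add, Polynomial.map_one, Polynomial.map_mul,
        Polynomial.map_ofNat, Polynomial.map_pow, map_X, Nat.reduceAdd, Nat.reducePow, Nat.mod_succ,
        Nat.cast_one, sub_self, mul_zero, zero_mul, add_zero, mul_one]
    all_goals linear_combination (norm := (ring_nf; reduce_mod_char))

theorem modFour_blockProd {m : ℕ} (hm : 1 ≤ m) :
    modFour.mapMatrix (blockProd r 0 (2 ^ (m + 2))) =
      modFour.mapMatrix (closedForm prefixForm m) ∧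
    modFour.mapMatrix (blockProd r (2 ^ (m + 2)) (2 ^ (m + 2))) =
      modFour.mapMatrix (closedForm blockForm m) := by
  induction m, hm using Nat.le_induction with
  | base => exact modFour_blockProd_two_pow_three hr0 hre hro
  | succ m hm ih =>
    obtain ⟨ihG, ihN⟩ := ih
    have hs := congrArg modFour (Spoly_sq hm)
    simp only [map_add, map_sub, map_mul, map_pow, map_ofNat] at hs
    rw [show m + 1 + 2 = m + 2 + 1 from rfl]
    constructor
    · rw [blockProd_zero_two_pow_succ, map_mul, ihG, ihN, closedForm_succ _ hm, closedForm,
        closedForm]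
      simp only [map_prefixForm, map_blockForm, map_add, map_sub, map_mul, map_pow, map_one,
        map_natCast]
      exact (prefixForm_succ hs).symm
    · rw [blockProd_two_pow_succ hre hro, map_mul, ihG, mapMatrix_modFour_comp_neg_X, ihN,
        ← mapMatrix_modFour_comp_neg_X, closedForm_blockForm_comp_neg_X, closedForm_succ _ hm,
        closedForm]
      simp only [map_prefixForm, map_blockForm, map_add, map_sub, map_mul, map_pow, map_one,
        map_ofNat, map_natCast, map_neg]
      exact (blockForm_succ hs).symm

theorem modFour_Qb {Pb Qb : ℕ → ℤ[X]} (hPQb : ∀ n : ℕ, 2 ≤ n →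
      !![Pb (2 ^ n - 2), Pb (2 ^ n - 1); Qb (2 ^ n - 2), Qb (2 ^ n - 1)] =
        ((List.range (2 ^ n)).map (fun i => step r (2 ^ n + i))).prod)
    {m : ℕ} (hm : 1 ≤ m) :
    modFour (Qb (2 ^ (m + 2) - 2)) = modFour (closedForm blockForm m 1 0) ∧
    modFour (Qb (2 ^ (m + 2) - 1)) = modFour (closedForm blockForm m 1 1) := by
  have h := congrArg modFour.mapMatrix (hPQb (m + 2) (by omega))
  rw [← blockProd, (modFour_blockProd hr0 hre hro hm).2, mapMatrix_fin_two] at h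
  exact ⟨by simpa using congrFun (congrFun h 1) 0, by simpa using congrFun (congrFun h 1) 1⟩

end ModFour

/-- (Lemma 5.3 (9)–(12).) Mod-4 description of the polynomials `Q^b` built from the blocks
`r_{2^n} ⋯ r_{2^{n+1}-1}` of the Rudin–Shapiro sequence. -/
theorem stmt15 (r : ℕ → ℤ) (hr0 : r 0 = 1)
    (hre : ∀ n, r (2 * n) = r n) (hro : ∀ n, r (2 * n + 1) = (-1) ^ n * r n)
    (Pb Qb : ℕ → Polynomial ℤ)
    (hPQb : ∀ n : ℕ, 2 ≤ n →
      !![Pb (2 ^ n - 2), Pb (2 ^ n - 1); Qb (2 ^ n - 2), Qb (2 ^ n - 1)] =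
        ((List.range (2 ^ n)).map (fun i => step r (2 ^ n + i))).prod) :
    ∀ j : ℕ, 2 ≤ j →
      (∀ i : ℕ, (Qb (2 ^ (2 * j) - 2)).coeff i ≡
        (1 + 2 * (1 + X) * Spoly (2 * j - 2) : Polynomial ℤ).coeff i [ZMOD 4]) ∧
      (∀ i : ℕ, (Qb (2 ^ (2 * j + 1) - 2)).coeff i ≡
        (1 + 2 * X + 2 * (1 + X) * Spoly (2 * j - 1) :
          Polynomial ℤ).coeff i [ZMOD 4]) ∧
      (∀ i : ℕ, (Qb (2 ^ (2 * j) - 1)).coeff i ≡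
        (1 + 2 * X ^ 2 + 2 * X ^ 5 + (3 + 2 * X ^ 3) * Spoly (2 * j - 2) +
          (2 + 2 * X) * Tpoly (2 * j - 2) + 2 * X * Sepoly (j - 1) +
          X ^ (2 ^ (2 * j - 1)) : Polynomial ℤ).coeff i [ZMOD 4]) ∧
      (∀ i : ℕ, (Qb (2 ^ (2 * j + 1) - 1)).coeff i ≡
        (1 + 2 * X ^ 2 + 2 * X ^ 5 + (3 + 2 * X ^ 3) * Spoly (2 * j - 1) +
          (2 + 2 * X) * Tpoly (2 * j - 1) + 2 * X * Sopoly (j - 1) +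
          X ^ (2 ^ (2 * j)) : Polynomial ℤ).coeff i [ZMOD 4]) := by
  intro j hj
  obtain ⟨k, rfl⟩ := Nat.exists_eq_add_of_le' hj
  obtain ⟨hE0, hE1⟩ := modFour_Qb hr0 hre hro hPQb (m := 2 * k + 2) (by omega)
  obtain ⟨hO0, hO1⟩ := modFour_Qb hr0 hre hro hPQb (m := 2 * k + 3) (by omega)
  rw [show 2 * (k + 2) - 2 = 2 * k + 2 by omega, show 2 * (k + 2) - 1 = 2 * k + 3 by omega,
    show k + 2 - 1 = k + 1 by omega, show 2 * (k + 2) = 2 * k + 2 + 2 by ring]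
  refine ⟨coeff_modEq_of_modFour_eq (hE0.trans (congrArg modFour ?_)),
    coeff_modEq_of_modFour_eq (hO0.trans (congrArg modFour ?_)),
    coeff_modEq_of_modFour_eq (hE1.trans (congrArg modFour ?_)),
    coeff_modEq_of_modFour_eq (hO1.trans (congrArg modFour ?_))⟩
  · rw [closedForm_blockForm_one_zero, show (2 * k + 2) % 2 = 0 by omega, Nat.cast_zero]
    ring
  · rw [closedForm_blockForm_one_zero, show (2 * k + 3) % 2 = 1 by omega, Nat.cast_one]
    ring
  · rw [closedForm_blockForm_one_one, show 2 * k + 2 + 2 = 2 * (k + 1) + 2 by ring,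
      altSpoly_two_mul_add_two]
  · rw [closedForm_blockForm_one_one, show 2 * k + 3 + 2 = 2 * (k + 1) + 3 by ring,
      altSpoly_two_mul_add_three]
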